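/- arXiv:1810.01095 — 5 statements merged into one kernel-verified Lean document; each statement's English description precedes it below -/
import Mathlib

section
/- Let g be a finite-dimensional real Lie algebra, k an abelian Lie algebra of derivations of g, and φ : g → k a linear map satisfying φ([g,g]) = 0 and φ(σ(X)) = 0 for all X ∈ g and σ ∈ k. Then the modified bracket [X,Y]⁻ = [X,Y] + φ(X)(Y) − φ(Y)(X) defines a Lie algebra structure on the underlying vector space of g. -/
/-- The modified bracket [X,Y]⁻ = [X,Y] + φ(X)(Y) − φ(Y)(X). -/
def modBracket {g : Type*} [LieRing g] [LieAlgebra ℝ g]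
    (φ : g →ₗ[ℝ] Module.End ℝ g) (x y : g) : g :=
  ⁅x, y⁆ + φ x y - φ y x

/-- Let g be a finite-dimensional real Lie algebra, k an abelian Lie algebra of
derivations of g, and φ : g → k linear with φ([g,g]) = 0 and φ(σ(X)) = 0 for all
X ∈ g, σ ∈ k.  Then [X,Y]⁻ = [X,Y] + φ(X)(Y) − φ(Y)(X) defines a Lie algebra
structure on g: it is bilinear, antisymmetric and satisfies the Jacobi identity. -/
theorem stmt4 {g : Type*} [LieRing g] [LieAlgebra ℝ g] [Module.Finite ℝ g]
    (φ : g →ₗ[ℝ] Module.End ℝ g)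
    (hder : ∀ x y z : g, φ x ⁅y, z⁆ = ⁅φ x y, z⁆ + ⁅y, φ x z⁆)
    (habel : ∀ x y : g, Commute (φ x) (φ y))
    (hbr : ∀ x y : g, φ ⁅x, y⁆ = 0)
    (him : ∀ x y : g, φ (φ x y) = 0) :
    (∀ x y z : g, modBracket φ (x + y) z = modBracket φ x z + modBracket φ y z) ∧
    (∀ x y z : g, modBracket φ x (y + z) = modBracket φ x y + modBracket φ x z) ∧
    (∀ (r : ℝ) (x y : g), modBracket φ (r • x) y = r • modBracket φ x y) ∧
    (∀ (r : ℝ) (x y : g), modBracket φ x (r • y) = r • modBracket φ x y) ∧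
    (∀ x y : g, modBracket φ x y = -modBracket φ y x) ∧
    (∀ x y z : g,
      modBracket φ x (modBracket φ y z) + modBracket φ y (modBracket φ z x) +
        modBracket φ z (modBracket φ x y) = 0) := by
  have hc : ∀ x y z : g, φ x (φ y z) = φ y (φ x z) := by
    intro x y z
    have h := (habel x y).eq
    calc φ x (φ y z) = (φ x * φ y) z := rfl
      _ = (φ y * φ x) z := by rw [h]
      _ = φ y (φ x z) := rfl
  have expand : ∀ x y z : g, modBracket φ x (modBracket φ y z) =
      ⁅x, ⁅y, z⁆⁆ + ⁅x, φ y z⁆ - ⁅x, φ z y⁆ + ⁅φ x y, z⁆ + ⁅y, φ x z⁆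
        + φ x (φ y z) - φ x (φ z y) := by
    intro x y z
    simp only [modBracket, lie_add, lie_sub, map_add, map_sub, hbr, him, hder,
      LinearMap.add_apply, LinearMap.sub_apply, LinearMap.zero_apply]
    abel
  refine ⟨?_, ?_, ?_, ?_, ?_, ?_⟩
  · intro x y z
    simp only [modBracket, add_lie, map_add, LinearMap.add_apply]
    abel
  · intro x y z
    simp only [modBracket, lie_add, map_add, LinearMap.add_apply]
    abel
  · intro r x y
    simp only [modBracket, smul_lie, map_smul, LinearMap.smul_apply, smul_add, smul_sub]
  · intro r x y
    simp only [modBracket, lie_smul, map_smul, LinearMap.smul_apply, smul_add, smul_sub]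
  · intro x y
    simp only [modBracket]
    rw [show ⁅x, y⁆ = -⁅y, x⁆ from (lie_skew _ _).symm]
    abel
  · intro x y z
    rw [expand x y z, expand y z x, expand z x y,
      hc x y z, hc y z x, hc z x y,
      show ⁅φ x y, z⁆ = -⁅z, φ x y⁆ from (lie_skew _ _).symm,
      show ⁅φ y z, x⁆ = -⁅x, φ y z⁆ from (lie_skew _ _).symm,
      show ⁅φ z x, y⁆ = -⁅y, φ z x⁆ from (lie_skew _ _).symm,
      show (0 : g) = ⁅x, ⁅y, z⁆⁆ + ⁅y, ⁅z, x⁆⁆ + ⁅z, ⁅x, y⁆⁆ from (lie_jacobi x y z).symm]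
    abel
end

section
/- If every value of a modification datum φ : g → Der(g) is skew-symmetric with respect to a fixed positive definite inner product on g, then the modified Lie algebra (g,[·,·]⁻) is unimodular if and only if (g,[·,·]) is unimodular. -/
/-- If every value of a modification datum φ : g → Der(g) is skew-symmetric with
respect to a fixed positive definite inner product on g, then the modified Lie
algebra (g,[·,·]⁻), with [x,y]⁻ = [x,y] + φ(x)y − φ(y)x, is unimodular if and
only if (g,[·,·]) is unimodular. -/
theorem stmt6 {g : Type*} [LieRing g] [LieAlgebra ℝ g] [Module.Finite ℝ g]
    (B : g →ₗ[ℝ] g →ₗ[ℝ] ℝ)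
    (hsymm : ∀ x y : g, B x y = B y x)
    (hpos : ∀ x : g, x ≠ 0 → 0 < B x x)
    (φ : g →ₗ[ℝ] Module.End ℝ g)
    (hder : ∀ x y z : g, φ x ⁅y, z⁆ = ⁅φ x y, z⁆ + ⁅y, φ x z⁆)
    (habel : ∀ x y : g, Commute (φ x) (φ y))
    (hbr : ∀ x y : g, φ ⁅x, y⁆ = 0)
    (him : ∀ x y : g, φ (φ x y) = 0)
    (hskew : ∀ x y z : g, B (φ x y) z + B y (φ x z) = 0) :
    -- the map y ↦ [x,y]⁻ = [x,y] + φ(x)y − φ(y)x is ad x + φ x − φ.flip x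
    (∀ x : g, LinearMap.trace ℝ g
        ((LieAlgebra.ad ℝ g x : Module.End ℝ g) + φ x - LinearMap.flip φ x) = 0) ↔
      (∀ x : g, LinearMap.trace ℝ g (LieAlgebra.ad ℝ g x : Module.End ℝ g) = 0) := by
  -- `flip φ x` is square-zero, hence has trace zero.
  have h2 : ∀ x : g, LinearMap.trace ℝ g (LinearMap.flip φ x) = 0 := by
    intro x
    have hnil : IsNilpotent (LinearMap.flip φ x) := by
      refine ⟨2, ?_⟩
      ext y
      simp [pow_two, Module.End.mul_apply, him]
    exact (LinearMap.isNilpotent_trace_of_isNilpotent hnil).eq_zero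
  -- `φ x` is skew-adjoint w.r.t. the positive definite form `B`, hence traceless.
  have h1 : ∀ x : g, LinearMap.trace ℝ g (φ x) = 0 := by
    intro x
    let C : InnerProductSpace.Core ℝ g :=
      { inner := fun a b => B a b
        conj_inner_symm := fun a b => by simpa using hsymm b a
        re_inner_nonneg := fun a => by
          rcases eq_or_ne a 0 with h | h
          · simp [h]
          · simpa using (hpos a h).le
        add_left := fun a b c => by simp
        smul_left := fun a b r => by simp
        definite := fun a ha => by
          by_contra h
          exact (hpos a h).ne' (by simpa using ha) }
    letI : NormedAddCommGroup g := C.toNormedAddCommGroup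
    letI : InnerProductSpace ℝ g := InnerProductSpace.ofCore C.toCore
    haveI : FiniteDimensional ℝ g := ‹Module.Finite ℝ g›
    let b := stdOrthonormalBasis ℝ g
    have hdiag : ∀ i, b.toBasis.repr (φ x (b i)) i = B (b i) (φ x (b i)) := by
      intro i
      rw [b.coe_toBasis_repr_apply, b.repr_apply_apply]
      rfl
    rw [LinearMap.trace_eq_matrix_trace ℝ b.toBasis, Matrix.trace]
    have : ∀ i, (LinearMap.toMatrix b.toBasis b.toBasis (φ x)).diag i = 0 := by
      intro i
      have h := hskew x (b i) (b i)
      rw [hsymm (φ x (b i)) (b i)] at h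
      have hz : B (b i) (φ x (b i)) = 0 := by linarith
      simp [Matrix.diag, LinearMap.toMatrix_apply, hdiag, hz]
    simp only [Matrix.diag] at this
    exact Finset.sum_eq_zero fun i _ => this i
  constructor <;> intro h x <;> have hx := h x <;>
    simp only [map_add, map_sub, h1, h2, add_zero, sub_zero] at hx ⊢ <;> exact hx
end

section
/- On the 4-dimensional Lie algebra g′ with basis {X,Y,Z,W} and brackets [X,Y] = −Z, [W,X] = −Y, [W,Y] = X (all other brackets zero), the endomorphism J defined by JX = −Y, JY = X, JZ = −W, JW = Z satisfies J² = −id and has vanishing Nijenhuis tensor: [JU,JV] − [U,V] − J[JU,V] − J[U,JV] = 0 for all U, V ∈ g′. -/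
/-- On the 4-dimensional Lie algebra g′ spanned by {X,Y,Z,W} with brackets
[X,Y] = −Z, [W,X] = −Y, [W,Y] = X (all other brackets zero), the endomorphism J
with JX = −Y, JY = X, JZ = −W, JW = Z satisfies J² = −id and has vanishing
Nijenhuis tensor. -/
theorem stmt9 {g : Type*} [LieRing g] [LieAlgebra ℝ g]
    (X Y Z W : g)
    (hspan : ∀ v : g, ∃ α β γ δ : ℝ, v = α • X + β • Y + γ • Z + δ • W)
    (h1 : ⁅X, Y⁆ = -Z) (h2 : ⁅W, X⁆ = -Y) (h3 : ⁅W, Y⁆ = X)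
    (h4 : ⁅X, Z⁆ = 0) (h5 : ⁅Y, Z⁆ = 0) (h6 : ⁅Z, W⁆ = 0)
    (J : g →ₗ[ℝ] g)
    (hJX : J X = -Y) (hJY : J Y = X) (hJZ : J Z = -W) (hJW : J W = Z) :
    (∀ v : g, J (J v) = -v) ∧
      (∀ U V : g, ⁅J U, J V⁆ - ⁅U, V⁆ - J ⁅J U, V⁆ - J ⁅U, J V⁆ = 0) := by
  have r1 : ⁅Y, X⁆ = Z := by rw [← lie_skew, h1, neg_neg]
  have r2 : ⁅X, W⁆ = Y := by rw [← lie_skew, h2, neg_neg]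
  have r3 : ⁅Y, W⁆ = -X := by rw [← lie_skew, h3]
  have r4 : ⁅Z, X⁆ = 0 := by rw [← lie_skew, h4, neg_zero]
  have r5 : ⁅Z, Y⁆ = 0 := by rw [← lie_skew, h5, neg_zero]
  have r6 : ⁅W, Z⁆ = 0 := by rw [← lie_skew, h6, neg_zero]
  constructor
  · intro v
    obtain ⟨a, b, c, d, rfl⟩ := hspan v
    simp only [map_add, map_smul, map_neg, hJX, hJY, hJZ, hJW]
    module
  · intro U V
    obtain ⟨a, b, c, d, rfl⟩ := hspan U
    obtain ⟨e, f, k, l, rfl⟩ := hspan V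
    simp only [map_add, map_smul, map_neg, map_smul, hJX, hJY, hJZ, hJW,
      lie_add, add_lie, lie_smul, smul_lie, lie_neg, neg_lie, lie_self,
      h1, h2, h3, h4, h5, h6, r1, r2, r3, r4, r5, r6,
      smul_zero, smul_neg, neg_neg, neg_zero, add_zero, zero_add, map_zero]
    module
end

section
/- With the setup above (g = R × sl(2,R), metric g_ψ with matrix A, D = c² − a² − b² > 0, ξ = (1/D)(cT + bX − aY)), one has g_ψ([ξ,Z],Z) + g_ψ(Z,[ξ,Z]) = −(2/D)(a² + b²). Consequently ad ξ is skew-symmetric with respect to g_ψ (i.e. g_ψ([ξ,U],V) + g_ψ(U,[ξ,V]) = 0 for all U,V) if and only if a = b = 0. -/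
/-- With g = R × sl(2,R) (T central, [X,Y] = −Z, [Z,X] = Y, [Z,Y] = −X), the
metric g_ψ with matrix A, D = c² − a² − b² > 0 and ξ = (1/D)(cT + bX − aY), one
has g_ψ([ξ,Z],Z) + g_ψ(Z,[ξ,Z]) = −(2/D)(a² + b²); consequently ad ξ is
skew-symmetric with respect to g_ψ if and only if a = b = 0. -/
theorem stmt14 {g : Type*} [LieRing g] [LieAlgebra ℝ g]
    (T X Y Z : g)
    (hspan : ∀ v : g, ∃ α β γ δ : ℝ, v = α • T + β • X + γ • Y + δ • Z)
    (hT : ∀ v : g, ⁅T, v⁆ = 0)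
    (h1 : ⁅X, Y⁆ = -Z) (h2 : ⁅Z, X⁆ = Y) (h3 : ⁅Z, Y⁆ = -X)
    (a b c : ℝ) (hc : 0 < c) (hab : a ^ 2 + b ^ 2 < c ^ 2)
    (B : g →ₗ[ℝ] g →ₗ[ℝ] ℝ)
    (hsymm : ∀ u v : g, B u v = B v u)
    (hTT : B T T = c) (hTX : B T X = -b) (hTY : B T Y = a) (hTZ : B T Z = 0)
    (hXX : B X X = c) (hXY : B X Y = 0) (hXZ : B X Z = a)
    (hYY : B Y Y = c) (hYZ : B Y Z = b) (hZZ : B Z Z = c) :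
    let D : ℝ := c ^ 2 - a ^ 2 - b ^ 2
    let ξ : g := (1 / D) • (c • T + b • X - a • Y)
    (B ⁅ξ, Z⁆ Z + B Z ⁅ξ, Z⁆ = -(2 / D) * (a ^ 2 + b ^ 2)) ∧
      ((∀ U V : g, B ⁅ξ, U⁆ V + B U ⁅ξ, V⁆ = 0) ↔ (a = 0 ∧ b = 0)) := by
  intro D ξ
  have hD : D ≠ 0 := by
    have : 0 < D := by simp only [D]; linarith
    linarith
  have hXZ' : ⁅X, Z⁆ = -Y := by rw [← lie_skew, h2]
  have hYZ' : ⁅Y, Z⁆ = X := by rw [← lie_skew, h3, neg_neg]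
  have hbrZ : ⁅ξ, Z⁆ = (1 / D) • ((-b) • Y + (-a) • X) := by
    simp only [ξ, smul_lie, sub_lie, add_lie, hT, hXZ', hYZ', smul_zero,
      zero_add, smul_neg, neg_smul]
    module
  have hfst : B ⁅ξ, Z⁆ Z + B Z ⁅ξ, Z⁆ = -(2 / D) * (a ^ 2 + b ^ 2) := by
    rw [hbrZ]
    simp only [map_smul, map_add, map_neg, LinearMap.add_apply, LinearMap.neg_apply,
      LinearMap.smul_apply, smul_eq_mul, hYZ, hXZ, hsymm Z Y, hsymm Z X]
    field_simp
    ring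
  refine ⟨hfst, ?_, ?_⟩
  · intro hall
    have := hall Z Z
    rw [hfst] at this
    have hab0 : a ^ 2 + b ^ 2 = 0 := by
      have h2D : (2 / D) ≠ 0 := by positivity
      have : (2 / D) * (a ^ 2 + b ^ 2) = 0 := by linarith
      exact (mul_eq_zero.mp this).resolve_left h2D
    constructor <;> nlinarith [sq_nonneg a, sq_nonneg b]
  · rintro ⟨ha, hb⟩ U V
    have hξ : ξ = (1 / D * c) • T := by
      simp only [ξ, ha, hb, zero_smul, add_zero, sub_zero, smul_smul]
    have : ∀ W : g, ⁅ξ, W⁆ = 0 := by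
      intro W; rw [hξ, smul_lie, hT, smul_zero]
    simp [this]
end

section
/- On the 4-dimensional Lie algebra g = R × sl(2,R) with basis {T,X,Y,Z} (T central, [X,Y] = −Z, [Z,X] = Y, [Z,Y] = −X), the endomorphism J defined by JY = X, JX = −Y, JT = Z, JZ = −T satisfies J² = −id and has vanishing Nijenhuis tensor: [JU,JV] − [U,V] − J[JU,V] − J[U,JV] = 0 for all U, V ∈ g. -/
/-- On the 4-dimensional Lie algebra g = R × sl(2,R) with basis {T,X,Y,Z}
(T central, [X,Y] = −Z, [Z,X] = Y, [Z,Y] = −X), the endomorphism J with JY = X,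
JX = −Y, JT = Z, JZ = −T satisfies J² = −id and has vanishing Nijenhuis tensor. -/
theorem stmt16 {g : Type*} [LieRing g] [LieAlgebra ℝ g]
    (T X Y Z : g)
    (hspan : ∀ v : g, ∃ α β γ δ : ℝ, v = α • T + β • X + γ • Y + δ • Z)
    (hT : ∀ v : g, ⁅T, v⁆ = 0)
    (h1 : ⁅X, Y⁆ = -Z) (h2 : ⁅Z, X⁆ = Y) (h3 : ⁅Z, Y⁆ = -X)
    (J : g →ₗ[ℝ] g)
    (hJY : J Y = X) (hJX : J X = -Y) (hJT : J T = Z) (hJZ : J Z = -T) :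
    (∀ v : g, J (J v) = -v) ∧
      (∀ U V : g, ⁅J U, J V⁆ - ⁅U, V⁆ - J ⁅J U, V⁆ - J ⁅U, J V⁆ = 0) := by
  have hT' : ∀ v : g, ⁅v, T⁆ = 0 := by
    intro v; rw [← lie_skew, hT, neg_zero]
  have h1' : ⁅Y, X⁆ = Z := by rw [← lie_skew, h1, neg_neg]
  have h2' : ⁅X, Z⁆ = -Y := by rw [← lie_skew, h2]
  have h3' : ⁅Y, Z⁆ = X := by rw [← lie_skew, h3, neg_neg]
  constructor
  · intro v
    obtain ⟨α, β, γ, δ, hv⟩ := hspan v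
    subst hv
    simp only [map_add, map_smul, hJY, hJX, hJT, hJZ, map_neg, smul_neg]
    abel
  · intro U V
    obtain ⟨a, b, c, d, hU⟩ := hspan U
    obtain ⟨a', b', c', d', hV⟩ := hspan V
    subst hU hV
    simp only [map_add, map_smul, map_zero, hJY, hJX, hJT, hJZ, map_neg, smul_neg,
      lie_add, add_lie, lie_smul, smul_lie, lie_neg, neg_lie, lie_self,
      hT, hT', h1, h1', h2, h2', h3, h3', smul_zero, neg_zero, neg_neg,
      smul_neg]
    module
end
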